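/- Let C and M be cocomplete categories, U : C → M a faithful colimit-preserving functor, with M complete, C co-wellpowered with a generating set G, and suppose C and M have the same initial object 0 with U(0) = 0. Then C is complete. Explicitly, the limit of a functor F : A → C from a small category is constructed as follows: let P = lim U∘F in M with projections q_a : P → UF(a); form the comma-type category H of pairs (E, p) with E ∈ C and p : U(E) → P in M such that each composite q_a ∘ p lifts to a morphism in C; then H has a final object (E₀, p₀), and E₀ together with the lifted morphisms π_a = q_a p₀ is the limit of F in C. -/

import Mathlib

/-!
Completeness is the dual special adjoint functor theorem: a cocomplete, co-wellpowered category
with a small separating set is complete. Given that, the final object of the category of pairs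
`(E, p : U E ⟶ lim (F ⋙ U))` whose projections lift to `C` is the limit of `F` itself, with
`p` the comparison map: faithfulness of `U` makes the lifts unique, hence natural, so every
such pair carries a cone over `F` and factors uniquely through the limit.
-/

open CategoryTheory Limits

section

variable {A : Type*} [Category A] {C : Type*} [Category C] {M : Type*} [Category M]

def ProjectionsLift (U : C ⥤ M) (F : A ⥤ C) [HasLimit (F ⋙ U)] :
    ObjectProperty (CostructuredArrow U (limit (F ⋙ U))) :=
  fun f => ∀ a : A, ∃ g : f.left ⟶ F.obj a, U.map g = f.hom ≫ limit.π (F ⋙ U) a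

namespace ProjectionsLift

variable {U : C ⥤ M} {F : A ⥤ C} [HasLimit (F ⋙ U)]

theorem eq_of_map_eq [U.Faithful] (X : (ProjectionsLift U F).FullSubcategory) {a : A}
    {g g' : X.obj.left ⟶ F.obj a} (hg : U.map g = X.obj.hom ≫ limit.π (F ⋙ U) a)
    (hg' : U.map g' = X.obj.hom ≫ limit.π (F ⋙ U) a) : g = g' :=
  U.map_injective (hg.trans hg'.symm)

noncomputable def cone [U.Faithful] (X : (ProjectionsLift U F).FullSubcategory) : Cone F where
  pt := X.obj.left
  π :=
    { app := fun a => (X.property a).choose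
      naturality := fun a b φ => by
        refine (Category.id_comp _).trans (eq_of_map_eq X (X.property b).choose_spec ?_)
        rw [U.map_comp, (X.property a).choose_spec, Category.assoc, ← Functor.comp_map,
          limit.w (F ⋙ U) φ] }

theorem map_cone_π_app [U.Faithful] (X : (ProjectionsLift U F).FullSubcategory) (a : A) :
    U.map ((cone X).π.app a) = X.obj.hom ≫ limit.π (F ⋙ U) a :=
  (X.property a).choose_spec

variable [HasLimit F] [U.Faithful]

theorem map_lift_comp_post (X : (ProjectionsLift U F).FullSubcategory) :
    U.map (limit.lift F (cone X)) ≫ limit.post F U = X.obj.hom := by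
  refine limit.hom_ext fun a => ?_
  rw [Category.assoc, limit.post_π, ← U.map_comp, limit.lift_π]
  exact map_cone_π_app X a

theorem eq_lift_of_map_comp_post (X : (ProjectionsLift U F).FullSubcategory)
    {f : X.obj.left ⟶ limit F} (hf : U.map f ≫ limit.post F U = X.obj.hom) :
    f = limit.lift F (cone X) := by
  refine limit.hom_ext fun a =>
    (eq_of_map_eq X ?_ (map_cone_π_app X a)).trans (limit.lift_π (cone X) a).symm
  rw [U.map_comp, ← limit.post_π F U a, ← Category.assoc, hf]

variable (U F)

noncomputable def limitObj : (ProjectionsLift U F).FullSubcategory :=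
  ⟨CostructuredArrow.mk (limit.post F U), fun a => ⟨limit.π F a, (limit.post_π F U a).symm⟩⟩

noncomputable def isTerminalLimitObj : IsTerminal (limitObj U F) :=
  IsTerminal.ofUniqueHom
    (fun X => ObjectProperty.homMk (CostructuredArrow.homMk _ (map_lift_comp_post X)))
    (fun X m => ObjectProperty.hom_ext _ (CostructuredArrow.hom_ext _ _
      (eq_lift_of_map_comp_post X (CostructuredArrow.w m.hom))))

end ProjectionsLift

end

theorem complete_of_SAFT_construction
    (C : Type u) [Category.{u} C] (M : Type u) [Category.{u} M]
    [HasColimits C] [HasLimits M]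
    [WellPowered.{u} Cᵒᵖ] (G : Set C) (hG : ObjectProperty.IsSeparating (C := C) G)
    (U : C ⥤ M) [U.Faithful] :
    HasLimits C ∧
    ∀ (A : Type u) [Category.{u} A] (F : A ⥤ C),
      ∃ T : ObjectProperty.FullSubcategory (fun f : CostructuredArrow U (limit (F ⋙ U)) =>
          ∀ a : A, ∃ g : f.left ⟶ F.obj a,
            U.map g = f.hom ≫ limit.π (F ⋙ U) a),
        Nonempty (IsTerminal T) ∧
        ∃ (c : Cone F) (_ : Nonempty (IsLimit c)) (e : c.pt ≅ T.obj.left),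
          ∀ a : A, U.map (c.π.app a) =
            U.map e.hom ≫ T.obj.hom ≫ limit.π (F ⋙ U) a := by
  have : HasLimits C := hasLimits_of_hasColimits_of_isSeparating hG
  refine ⟨this, fun A _ F => ⟨ProjectionsLift.limitObj U F,
    ⟨ProjectionsLift.isTerminalLimitObj U F⟩, limit.cone F, ⟨limit.isLimit F⟩, Iso.refl _,
    fun a => ?_⟩⟩
  simp [ProjectionsLift.limitObj]
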